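/- Let g be the sum of the coefficients of the short simple roots in θ = Σᵢ cᵢαᵢ, and let f be the index of connection of Δ. If g + 1 and f are relatively prime, then there is an element of the affine Weyl group Ŵ that maps the simplex D^(s)_min = {x ∈ V : (x,α) ≥ −1 for α ∈ Π_s, (x,α) ≥ 0 for α ∈ Π_l, (x,θ) ≤ 1} onto the dilated closed fundamental alcove (g+1)·closure(A) = {x ∈ V : (x,α) ≥ 0 for all α ∈ Π, (x,θ) ≤ g+1}. -/

import Mathlib

open scoped RealInnerProductSpace
open Module

noncomputable section

variable {V : Type*} [NormedAddCommGroup V] [InnerProductSpace ℝ V]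

/-- The underlying function of the orthogonal reflection in the hyperplane
orthogonal to `α` (the identity if `α = 0`). -/
def reflFun (α : V) (x : V) : V := x - (2 * ⟪α, x⟫ / ⟪α, α⟫) • α

lemma reflFun_involutive (α : V) : Function.Involutive (reflFun α) := by
  intro x
  by_cases h : α = 0
  · simp [reflFun, h]
  · have hs : ⟪α, α⟫ ≠ 0 := inner_self_ne_zero.mpr h
    have h1 : ⟪α, x - (2 * ⟪α, x⟫ / ⟪α, α⟫) • α⟫ = -⟪α, x⟫ := by
      rw [inner_sub_right, real_inner_smul_right]
      field_simp
      ring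
    simp only [reflFun]
    rw [h1, show 2 * -⟪α, x⟫ / ⟪α, α⟫ = -(2 * ⟪α, x⟫ / ⟪α, α⟫) by ring,
      neg_smul, sub_neg_eq_add]
    abel

/-- The orthogonal reflection in the hyperplane orthogonal to `α`, as a linear
equivalence (the identity if `α = 0`). -/
def sRefl (α : V) : V ≃ₗ[ℝ] V where
  toFun := reflFun α
  map_add' x y := by
    simp only [reflFun, inner_add_right]
    rw [show 2 * (⟪α, x⟫ + ⟪α, y⟫) / ⟪α, α⟫
        = 2 * ⟪α, x⟫ / ⟪α, α⟫ + 2 * ⟪α, y⟫ / ⟪α, α⟫ by ring, add_smul]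
    abel
  map_smul' c x := by
    simp only [reflFun, real_inner_smul_right, RingHom.id_apply, smul_sub, smul_smul]
    congr 2
    ring
  invFun := reflFun α
  left_inv := reflFun_involutive α
  right_inv := reflFun_involutive α

/-- The coroot `α∨ = 2α/(α,α)` of a vector `α`. -/
def corootVec (α : V) : V := (2 / ⟪α, α⟫) • α

/-- The (affine) hyperplane `{x | (x, μ) = k}`. -/
def rootHyperplane (μ : V) (k : ℝ) : Set V := {x : V | ⟪x, μ⟫ = k}

/-- `R` is a region of the hyperplane arrangement whose hyperplanes are encoded by the
pairs `(μ, k) ∈ A` (the hyperplane `{x | (x,μ) = k}`): a connected component of the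
complement of the union of the hyperplanes. -/
def IsRegionOf (A : Set (V × ℝ)) (R : Set V) : Prop :=
  ∃ x ∈ (⋃ h ∈ A, rootHyperplane h.1 h.2)ᶜ,
    R = connectedComponentIn (⋃ h ∈ A, rootHyperplane h.1 h.2)ᶜ x

open Classical in
/-- The characteristic polynomial of the hyperplane arrangement encoded by
`A : Set (V × ℝ)` in an ambient space of dimension `p`, evaluated at `t`, via
Whitney's theorem: `χ(A,t) = ∑ (-1)^{#S} t^{dim ∩ S}`, the sum being over all central
subarrangements `S ⊆ A` (junk value `0` if `A` is infinite). -/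
noncomputable def charPolyEval (p : ℕ) (A : Set (V × ℝ)) (t : ℝ) : ℝ :=
  if hA : A.Finite then
    ∑ S ∈ hA.toFinset.powerset,
      if (⋂ h ∈ (S : Set (V × ℝ)), rootHyperplane h.1 h.2).Nonempty then
        (-1 : ℝ) ^ S.card *
          t ^ (p - Module.finrank ℝ (Submodule.span ℝ (Prod.fst '' (S : Set (V × ℝ)))))
      else 0
  else 0

/-- The linear action of `w = v·t_r ∈ Ŵ` on `V ⊕ ℝδ`:
`w(μ + kδ) = v(μ) + (k - (μ,r))δ`. -/
def affAct (v : V ≃ₗ[ℝ] V) (r : V) (β : V × ℝ) : V × ℝ :=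
  (v β.1, β.2 - ⟪β.1, r⟫)

/-- The linear action of `w⁻¹` on `V ⊕ ℝδ`, for `w = v·t_r ∈ Ŵ`:
`w⁻¹(μ + kδ) = v⁻¹(μ) + (k + (v⁻¹μ, r))δ`. -/
def affActInv (v : V ≃ₗ[ℝ] V) (r : V) (β : V × ℝ) : V × ℝ :=
  (v.symm β.1, β.2 + ⟪v.symm β.1, r⟫)

/-- The affine `∗`-action of `w = v·t_r ∈ Ŵ` on `V`: `w ∗ x = v(x + r)`. -/
def affStar (v : V ≃ₗ[ℝ] V) (r : V) (x : V) : V := v (x + r)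

/-- The affine `∗`-action of `w⁻¹` on `V`, for `w = v·t_r ∈ Ŵ`: `w⁻¹ ∗ x = v⁻¹(x) - r`. -/
def affStarInv (v : V ≃ₗ[ℝ] V) (r : V) (x : V) : V := v.symm x - r

/-- An irreducible reduced crystallographic root system `Δ` of rank `p`, spanning a real
inner product space `V`, together with a choice of positive system `Δ⁺ = pos`, simple
roots `α₁, …, α_p`, and the highest root `θ`. -/
structure RootSystemData (V : Type*) [NormedAddCommGroup V] [InnerProductSpace ℝ V]
    (p : ℕ) where
  /-- the set of roots -/
  Δ : Set V
  finite : Δ.Finite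
  zero_notMem : (0 : V) ∉ Δ
  span_eq_top : Submodule.span ℝ Δ = ⊤
  finrank_eq : Module.finrank ℝ V = p
  neg_mem : ∀ α ∈ Δ, -α ∈ Δ
  /-- reduced: the only multiples of a root that are roots are `±α` -/
  reduced : ∀ α ∈ Δ, ∀ c : ℝ, c • α ∈ Δ → c = 1 ∨ c = -1
  /-- crystallographic: Cartan integers -/
  crystallographic : ∀ α ∈ Δ, ∀ β ∈ Δ, ∃ n : ℤ, 2 * ⟪α, β⟫ / ⟪α, α⟫ = (n : ℝ)
  reflect_mem : ∀ α ∈ Δ, ∀ β ∈ Δ, sRefl α β ∈ Δ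
  /-- irreducible: no splitting into two orthogonal parts -/
  irred : ∀ S T : Set V, Δ = S ∪ T → (∀ a ∈ S, ∀ b ∈ T, ⟪a, b⟫ = 0) → S = ∅ ∨ T = ∅
  /-- the simple roots `α₁, …, α_p` -/
  simpleRoot : Fin p → V
  simpleRoot_mem : ∀ i, simpleRoot i ∈ Δ
  simpleRoot_indep : LinearIndependent ℝ simpleRoot
  /-- the positive roots `Δ⁺` -/
  pos : Set V
  pos_def : pos = {α ∈ Δ | ∃ c : Fin p → ℕ, α = ∑ i, (c i : ℝ) • simpleRoot i}
  pos_or_neg : ∀ α ∈ Δ, α ∈ pos ∨ -α ∈ pos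
  /-- the highest root -/
  θ : V
  θ_mem : θ ∈ pos
  θ_highest : ∀ α ∈ pos, ∃ c : Fin p → ℕ, θ = α + ∑ i, (c i : ℝ) • simpleRoot i

namespace RootSystemData

variable {p : ℕ} (RS : RootSystemData V p)

/-- The coroot lattice `Q∨`, generated by the coroots of the roots. -/
def corootLattice : AddSubgroup V := AddSubgroup.closure (corootVec '' RS.Δ)

/-- The coweight lattice `P∨ = {x | (x, α) ∈ ℤ for all roots α}`. -/
def coweightLattice : AddSubgroup V where
  carrier := {x : V | ∀ α ∈ RS.Δ, ∃ n : ℤ, ⟪x, α⟫ = (n : ℝ)}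
  zero_mem' := fun α _ => ⟨0, by simp⟩
  add_mem' := by
    intro x y hx hy α hα
    obtain ⟨n, hn⟩ := hx α hα
    obtain ⟨m, hm⟩ := hy α hα
    exact ⟨n + m, by rw [inner_add_left, hn, hm]; push_cast; ring⟩
  neg_mem' := by
    intro x hx α hα
    obtain ⟨n, hn⟩ := hx α hα
    exact ⟨-n, by rw [inner_neg_left, hn]; push_cast; ring⟩

/-- The index of connection `f = [P∨ : Q∨]`. -/
noncomputable def indexOfConnection : ℕ :=
  RS.corootLattice.relIndex RS.coweightLattice

/-- The Weyl group `W`, generated by the reflections in the roots. -/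
def weylGroup : Subgroup (V ≃ₗ[ℝ] V) :=
  Subgroup.closure {w : V ≃ₗ[ℝ] V | ∃ α ∈ RS.Δ, w = sRefl α}

/-- The partial order `μ ≼ γ` on roots: `γ - μ` is a nonnegative integer combination of
the simple roots. -/
def rootLe (μ γ : V) : Prop :=
  ∃ c : Fin p → ℕ, γ = μ + ∑ i, (c i : ℝ) • RS.simpleRoot i

/-- An ideal of `Δ⁺`. -/
def IsIdeal (I : Set V) : Prop :=
  I ⊆ RS.pos ∧ ∀ γ ∈ I, ∀ μ ∈ RS.pos, γ + μ ∈ RS.Δ → γ + μ ∈ I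

/-- An antichain in the poset `(Δ⁺, ≼)`. -/
def IsRootAntichain (Γ : Set V) : Prop :=
  Γ ⊆ RS.pos ∧ ∀ μ ∈ Γ, ∀ γ ∈ Γ, RS.rootLe μ γ → μ = γ

/-- The set of minimal elements (generators, for an ideal) of a subset of `Δ⁺`. -/
def gens (I : Set V) : Set V := {γ ∈ I | ∀ μ ∈ I, RS.rootLe μ γ → μ = γ}

/-- The ideal `I⟨Γ⟩` generated by an antichain `Γ`. -/
def idealGen (Γ : Set V) : Set V := {μ ∈ RS.pos | ∃ γ ∈ Γ, RS.rootLe γ μ}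

/-- The set `Ξ(I)` of maximal elements of `Δ⁺ \ I`. -/
def XiSet (I : Set V) : Set V :=
  {γ ∈ RS.pos \ I | ∀ μ ∈ RS.pos \ I, RS.rootLe γ μ → γ = μ}

/-- `k(μ, I)`: the minimal number of summands in an expression of `μ` as a sum of
positive roots not in `I`. -/
noncomputable def kNum (I : Set V) (μ : V) : ℕ :=
  sInf {n : ℕ | ∃ f : Fin n → V, (∀ i, f i ∈ RS.pos \ I) ∧ μ = ∑ i, f i}

/-- A root is short if it is strictly shorter than the highest root `θ`. -/
def IsShort (α : V) : Prop := α ∈ RS.Δ ∧ ⟪α, α⟫ < ⟪RS.θ, RS.θ⟫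

/-- The short positive roots `Δ⁺_s`. -/
def shortPos : Set V := {α ∈ RS.pos | ⟪α, α⟫ < ⟪RS.θ, RS.θ⟫}

/-- The long positive roots `Δ⁺_l`. -/
def longPos : Set V := {α ∈ RS.pos | ⟪α, α⟫ = ⟪RS.θ, RS.θ⟫}

/-- `Δ` has roots of exactly two lengths, the squared length ratio (long over short)
being `ratio`. -/
def LengthRatio (ratio : ℝ) : Prop :=
  ∃ ls : ℝ, 0 < ls ∧ ls < ⟪RS.θ, RS.θ⟫ ∧
    (∀ α ∈ RS.Δ, ⟪α, α⟫ = ls ∨ ⟪α, α⟫ = ⟪RS.θ, RS.θ⟫) ∧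
    (∃ α ∈ RS.Δ, ⟪α, α⟫ = ls) ∧ ⟪RS.θ, RS.θ⟫ = ratio * ls

/-- `Δ` has roots of two different lengths. -/
def TwoLengths : Prop := ∃ ratio : ℝ, RS.LengthRatio ratio

/-- The simple roots `Π(Δ⁺_s)` of the root system `Δ_s` of short roots with respect to
the positive system `Δ⁺_s`: the short positive roots that are not sums of two short
positive roots. -/
def shortSimple : Set V :=
  {α ∈ RS.shortPos | ¬ ∃ β ∈ RS.shortPos, ∃ γ ∈ RS.shortPos, α = β + γ}

/-- The positive affine roots `Δ̂⁺`, an affine root `μ + kδ` being encoded as the pair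
`(μ, k)`. -/
def affPos : Set (V × ℝ) :=
  {β : V × ℝ | β.1 ∈ RS.Δ ∧ (0 < β.2 ∨ (β.2 = 0 ∧ β.1 ∈ RS.pos))}

/-- A pair `(v, r)` with `v ∈ W`, `r ∈ Q∨` represents the element `w = v·t_r` of the
affine Weyl group `Ŵ = W ⋉ Q∨`; it is dominant if `w(α) ∈ Δ̂⁺` for all `α ∈ Π`. -/
def IsDominantPair (v : V ≃ₗ[ℝ] V) (r : V) : Prop :=
  v ∈ RS.weylGroup ∧ r ∈ RS.corootLattice ∧
    ∀ i, affAct v r (RS.simpleRoot i, 0) ∈ RS.affPos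

/-- `N(w) = {β ∈ Δ̂⁺ | w(β) ∈ -Δ̂⁺}` for `w = v·t_r`. -/
def Nset (v : V ≃ₗ[ℝ] V) (r : V) : Set (V × ℝ) :=
  {β : V × ℝ | β ∈ RS.affPos ∧ -(affAct v r β) ∈ RS.affPos}

/-- The first layer ideal `I_w = {μ ∈ Δ⁺ | δ - μ ∈ N(w)}` of `w = v·t_r`. -/
def firstLayerIdeal (v : V ≃ₗ[ℝ] V) (r : V) : Set V :=
  {μ ∈ RS.pos | ((-μ, (1 : ℝ)) : V × ℝ) ∈ RS.Nset v r}

/-- `w = v·t_r` is minimal: dominant, and for every affine simple root `α ∈ Π̂`,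
writing `w⁻¹(α) = kδ + μ`, one has `k ≥ -1`. -/
def IsMinimalPair (v : V ≃ₗ[ℝ] V) (r : V) : Prop :=
  RS.IsDominantPair v r ∧
    (∀ i, -1 ≤ (affActInv v r (RS.simpleRoot i, 0)).2) ∧
    -1 ≤ (affActInv v r (-RS.θ, 1)).2

/-- `w = v·t_r` is maximal: dominant, and for every affine simple root `α ∈ Π̂`,
writing `w⁻¹(α) = kδ + μ`, one has `k ≤ 1`. -/
def IsMaximalPair (v : V ≃ₗ[ℝ] V) (r : V) : Prop :=
  RS.IsDominantPair v r ∧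
    (∀ i, (affActInv v r (RS.simpleRoot i, 0)).2 ≤ 1) ∧
    (affActInv v r (-RS.θ, 1)).2 ≤ 1

/-- `w = v·t_r` is `s`-minimal: dominant, `k ≥ -1` for short simple `α`, and `k ≥ 0`
for `α ∈ Π̂_l = Π_l ∪ {α₀}`, where `w⁻¹(α) = kδ + μ`. -/
def IsSMinimalPair (v : V ≃ₗ[ℝ] V) (r : V) : Prop :=
  RS.IsDominantPair v r ∧
    (∀ i, RS.IsShort (RS.simpleRoot i) →
      -1 ≤ (affActInv v r (RS.simpleRoot i, 0)).2) ∧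
    (∀ i, ¬ RS.IsShort (RS.simpleRoot i) →
      0 ≤ (affActInv v r (RS.simpleRoot i, 0)).2) ∧
    0 ≤ (affActInv v r (-RS.θ, 1)).2

/-- `w = v·t_r` is `s`-maximal: dominant, `k ≤ 1` for short simple `α`, and `k ≤ 0`
for `α ∈ Π̂_l = Π_l ∪ {α₀}`, where `w⁻¹(α) = kδ + μ`. -/
def IsSMaximalPair (v : V ≃ₗ[ℝ] V) (r : V) : Prop :=
  RS.IsDominantPair v r ∧
    (∀ i, RS.IsShort (RS.simpleRoot i) →
      (affActInv v r (RS.simpleRoot i, 0)).2 ≤ 1) ∧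
    (∀ i, ¬ RS.IsShort (RS.simpleRoot i) →
      (affActInv v r (RS.simpleRoot i, 0)).2 ≤ 0) ∧
    (affActInv v r (-RS.θ, 1)).2 ≤ 0

/-- The open fundamental Weyl chamber `C`. -/
def chamber : Set V := {x : V | ∀ i, 0 < ⟪x, RS.simpleRoot i⟫}

/-- The open fundamental alcove `A`. -/
def alcove : Set V := {x : V | (∀ i, 0 < ⟪x, RS.simpleRoot i⟫) ∧ ⟪x, RS.θ⟫ < 1}

/-- The affine arrangement of all hyperplanes `{x | (x,μ) = k}`, `μ ∈ Δ⁺`, `k ∈ ℤ`,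
whose regions are the alcoves. -/
def affineArrangement : Set (V × ℝ) :=
  {h : V × ℝ | h.1 ∈ RS.pos ∧ ∃ k : ℤ, h.2 = (k : ℝ)}

/-- The dominant region `R_I` of the Catalan (equivalently, Shi) arrangement attached
to an ideal `I ⊆ Δ⁺` under the Shi bijection. -/
def regionOfIdeal (I : Set V) : Set V :=
  {x ∈ RS.chamber | (∀ γ ∈ I, 1 < ⟪x, γ⟫) ∧ ∀ γ ∈ RS.pos \ I, ⟪x, γ⟫ < 1}

/-- The semi-Catalan arrangement `Cat_s(Δ)`. -/
def semiCatalan : Set (V × ℝ) :=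
  {h : V × ℝ | h.1 ∈ RS.shortPos ∧ (h.2 = -1 ∨ h.2 = 0 ∨ h.2 = 1)} ∪
    {h : V × ℝ | h.1 ∈ RS.longPos ∧ h.2 = 0}

/-- The `m`-semi-Catalan arrangement `Cat_s^m(Δ)`. -/
def semiCatalanM (m : ℕ) : Set (V × ℝ) :=
  {h : V × ℝ | h.1 ∈ RS.shortPos ∧ ∃ k : ℤ, |k| ≤ (m : ℤ) ∧ h.2 = (k : ℝ)} ∪
    {h : V × ℝ | h.1 ∈ RS.longPos ∧ h.2 = 0}

/-- The region `R_Γ^(s)` of the semi-Catalan arrangement attached to a short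
antichain `Γ`. -/
def sRegion (Γ : Set V) : Set V :=
  {x ∈ RS.chamber | (∀ μ ∈ RS.idealGen Γ ∩ RS.shortPos, 1 < ⟪x, μ⟫) ∧
    ∀ μ ∈ RS.shortPos \ RS.idealGen Γ, ⟪x, μ⟫ < 1}

/-- `α` has height `n` (sum of the coefficients over the simple roots). -/
def heightIs (α : V) (n : ℕ) : Prop :=
  ∃ c : Fin p → ℕ, α = ∑ i, (c i : ℝ) • RS.simpleRoot i ∧ ∑ i, c i = n

/-- `e` enumerates the exponents `e₁, …, e_p` of the Weyl group `W`, characterized by the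
Shapiro–Kostant–Steinberg property: for every `k ≥ 1`, the number of positive roots of
height `k` equals the number of exponents that are `≥ k`. -/
def IsExponents (e : Fin p → ℕ) : Prop :=
  ∀ k : ℕ, 1 ≤ k →
    {α ∈ RS.pos | RS.heightIs α k}.ncard = {i : Fin p | k ≤ e i}.ncard

/-- `h` is the Coxeter number of `W`, characterized by `#Δ = p·h`. -/
def IsCoxeterNumber (h : ℕ) : Prop := RS.Δ.ncard = p * h

open Classical in
/-- `g` is the sum of the coefficients of the short simple roots in the expression
`θ = Σ cᵢ αᵢ` of the highest root. -/
def IsShortCoeffSum (g : ℕ) : Prop :=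
  ∃ c : Fin p → ℕ, RS.θ = ∑ i, (c i : ℝ) • RS.simpleRoot i ∧
    (∑ i, if RS.IsShort (RS.simpleRoot i) then c i else 0) = g

open Classical in
/-- The number of constraints of the simplex
`D_max = {x | (x,αᵢ) ≤ 1 ∀i, (x,θ) ≥ 0}` that are active (hold with equality) at `x`;
for `x ∈ D_max` this is the codimension of the face of `D_max` containing `x`. -/
noncomputable def dmaxFaceCodim (x : V) : ℕ :=
  {i : Fin p | ⟪x, RS.simpleRoot i⟫ = 1}.ncard + (if ⟪x, RS.θ⟫ = 0 then 1 else 0)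

end RootSystemData

/-!
Let `ρ` be the coweight with `(ρ, α) = 1` for short and `(ρ, α) = 0` for long simple roots `α`,
so that `(ρ, θ) = g`, `ρ ∈ P∨` and `D^(s)_min + ρ = q·closure(A)` for `q = g + 1`. Since `q` is
prime to `f = [P∨ : Q∨]`, there is `l ∈ P∨` with `q l + ρ ∈ Q∨`.

For `u ∈ W` and `w ∈ P∨` the affine map `σ x = u (x + q w)` permutes the hyperplanes
`(x, β) ∈ qℤ`, `β ∈ Δ`, whose complement has `qA` as a connected component. Minimising the
distance to a point `c ∈ qA` over the orbit of `c + q l` under `W ⋉ qQ∨` (reflecting in a wall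
of `qA` strictly decreases it) gives `u ∈ W`, `s ∈ Q∨` with `σ c ∈ q·closure(A)` for
`w = l + s`; being off the walls, `σ c ∈ qA`, so `σ` maps `qA` onto itself and
`x ↦ u (x + (q (l + s) + ρ))`, an element of `Ŵ`, maps `D^(s)_min` onto `q·closure(A)`.
-/

open Set Metric Bornology

theorem AddSubgroup.exists_nsmul_add_mem_of_coprime {G : Type*} [AddCommGroup G]
    (H : AddSubgroup G) {K : AddSubgroup G} {n : ℕ} (hn : n.Coprime (H.relIndex K))
    {x : G} (hx : x ∈ K) : ∃ y ∈ K, n • y + x ∈ H := by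
  set f := H.relIndex K
  have hbezout : (n : ℤ) * n.gcdA f + f * n.gcdB f = 1 := by
    rw [← Nat.gcd_eq_gcd_ab, hn, Nat.cast_one]
  refine ⟨(-n.gcdA f) • x, zsmul_mem hx _, ?_⟩
  have hfx : f • x ∈ H := H.nsmul_relIndex_mem hx
  have : n • ((-n.gcdA f) • x) + x = n.gcdB f • (f • x) := by
    linear_combination (norm := module) -(hbezout • x)
  rw [this]
  exact zsmul_mem hfx _

/-- Reflecting `y` in a hyperplane `⟪·, a⟫ = t` separating it from `c` brings it closer to `c`. -/
theorem dist_reflect_lt_of_mul_neg {E : Type*} [NormedAddCommGroup E] [InnerProductSpace ℝ E]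
    {a y c : E} {t : ℝ} (hsep : (⟪y, a⟫ - t) * (⟪c, a⟫ - t) < 0) :
    dist (y - (2 * (⟪y, a⟫ - t) / ⟪a, a⟫) • a) c < dist y c := by
  have ha : 0 < ⟪a, a⟫ := by
    refine real_inner_self_pos.mpr fun h => ?_
    simp only [h, inner_zero_right] at hsep
    nlinarith
  set k := 2 * (⟪y, a⟫ - t) / ⟪a, a⟫
  have hka : k * ⟪a, a⟫ = 2 * (⟪y, a⟫ - t) := div_mul_cancel₀ _ ha.ne'
  have hsq : dist (y - k • a) c ^ 2 = dist y c ^ 2 + 2 * k * (⟪c, a⟫ - t) := by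
    rw [dist_eq_norm, dist_eq_norm, sub_right_comm, @norm_sub_sq_real, norm_smul,
      mul_pow, Real.norm_eq_abs, sq_abs, ← real_inner_self_eq_norm_sq a,
      real_inner_smul_right, inner_sub_left]
    linear_combination k * hka
  have hk : 2 * k * (⟪c, a⟫ - t) < 0 := by
    have : 2 * k * (⟪c, a⟫ - t) = 4 / ⟪a, a⟫ * ((⟪y, a⟫ - t) * (⟪c, a⟫ - t)) := by ring
    rw [this]
    exact mul_neg_of_pos_of_neg (by positivity) hsep
  exact lt_of_pow_lt_pow_left₀ 2 dist_nonneg (by linarith)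

namespace RootSystemData

variable {p : ℕ} (RS : RootSystemData V p)

lemma pos_subset : RS.pos ⊆ RS.Δ := by
  rw [RS.pos_def]
  exact fun _ h => h.1

lemma θ_mem_Δ : RS.θ ∈ RS.Δ := RS.pos_subset RS.θ_mem

lemma ne_zero_of_mem {α : V} (hα : α ∈ RS.Δ) : α ≠ 0 :=
  fun h => RS.zero_notMem (h ▸ hα)

lemma exists_eq_sum_of_mem_pos {β : V} (hβ : β ∈ RS.pos) :
    ∃ n : Fin p → ℕ, β = ∑ i, (n i : ℝ) • RS.simpleRoot i := by
  rw [RS.pos_def] at hβ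
  exact hβ.2

lemma span_simpleRoot : Submodule.span ℝ (range RS.simpleRoot) = ⊤ := by
  have hpos : RS.pos ⊆ Submodule.span ℝ (range RS.simpleRoot) := fun β hβ => by
    obtain ⟨n, rfl⟩ := RS.exists_eq_sum_of_mem_pos hβ
    exact Submodule.sum_mem _ fun i _ => Submodule.smul_mem _ _ (Submodule.subset_span ⟨i, rfl⟩)
  rw [eq_top_iff, ← RS.span_eq_top, Submodule.span_le]
  intro α hα
  rcases RS.pos_or_neg α hα with h | h
  · exact hpos h
  · simpa using Submodule.neg_mem _ (hpos h)

lemma finiteDimensional (RS : RootSystemData V p) : FiniteDimensional ℝ V :=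
  (Basis.mk RS.simpleRoot_indep RS.span_simpleRoot.ge).finiteDimensional_of_finite

lemma eq_zero_of_forall_inner_simpleRoot_eq_zero {x : V}
    (hx : ∀ i, ⟪x, RS.simpleRoot i⟫ = 0) : x = 0 := by
  have : x ∈ Submodule.span ℝ (range RS.simpleRoot) := RS.span_simpleRoot ▸ trivial
  obtain ⟨c, hc⟩ := (Submodule.mem_span_range_iff_exists_fun ℝ).mp this
  refine (inner_self_eq_zero (𝕜 := ℝ)).mp ?_
  nth_rewrite 2 [← hc]
  simp only [inner_sum, real_inner_smul_right, hx, mul_zero, Finset.sum_const_zero]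

lemma exists_inner_simpleRoot_eq (t : Fin p → ℝ) :
    ∃ z : V, ∀ i, ⟪z, RS.simpleRoot i⟫ = t i := by
  have := RS.finiteDimensional
  obtain ⟨b, hb⟩ : ∃ b : Basis (Fin p) ℝ V, ⇑b = RS.simpleRoot :=
    ⟨_, Basis.coe_mk RS.simpleRoot_indep RS.span_simpleRoot.ge⟩
  refine ⟨(InnerProductSpace.toDual ℝ V).symm
    (∑ j, t j • LinearMap.toContinuousLinearMap (b.coord j)), fun i => ?_⟩
  rw [← hb, InnerProductSpace.toDual_symm_apply]
  simp [Finsupp.single_apply]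

lemma inner_nonneg_of_mem_pos {x : V} (hx : ∀ i, 0 ≤ ⟪x, RS.simpleRoot i⟫) {β : V}
    (hβ : β ∈ RS.pos) : 0 ≤ ⟪x, β⟫ := by
  obtain ⟨n, rfl⟩ := RS.exists_eq_sum_of_mem_pos hβ
  simp only [inner_sum, real_inner_smul_right]
  exact Finset.sum_nonneg fun i _ => mul_nonneg (Nat.cast_nonneg _) (hx i)

lemma inner_pos_of_mem_pos {x : V} (hx : ∀ i, 0 < ⟪x, RS.simpleRoot i⟫) {β : V}
    (hβ : β ∈ RS.pos) : 0 < ⟪x, β⟫ := by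
  obtain ⟨n, hn⟩ := RS.exists_eq_sum_of_mem_pos hβ
  obtain ⟨j, hj⟩ : ∃ j, n j ≠ 0 := by
    by_contra! h
    exact RS.ne_zero_of_mem (RS.pos_subset hβ) (by simp [hn, h])
  rw [hn]
  simp only [inner_sum, real_inner_smul_right]
  exact Finset.sum_pos' (fun i _ => mul_nonneg (Nat.cast_nonneg _) (hx i).le)
    ⟨j, Finset.mem_univ j, mul_pos (Nat.cast_pos.mpr (Nat.pos_of_ne_zero hj)) (hx j)⟩

lemma inner_le_inner_θ_of_mem_pos {x : V} (hx : ∀ i, 0 ≤ ⟪x, RS.simpleRoot i⟫) {β : V}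
    (hβ : β ∈ RS.pos) : ⟪x, β⟫ ≤ ⟪x, RS.θ⟫ := by
  obtain ⟨m, hm⟩ := RS.θ_highest β hβ
  rw [hm, inner_add_right, le_add_iff_nonneg_right]
  simp only [inner_sum, real_inner_smul_right]
  exact Finset.sum_nonneg fun i _ => mul_nonneg (Nat.cast_nonneg _) (hx i)

lemma mem_coweightLattice_of_inner_simpleRoot {z : V}
    (hz : ∀ i, ∃ k : ℤ, ⟪z, RS.simpleRoot i⟫ = k) : z ∈ RS.coweightLattice := by
  choose k hk using hz
  have hpos : ∀ β ∈ RS.pos, ∃ m : ℤ, ⟪z, β⟫ = m := fun β hβ => by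
    obtain ⟨n, rfl⟩ := RS.exists_eq_sum_of_mem_pos hβ
    exact ⟨∑ i, n i * k i, by simp [inner_sum, real_inner_smul_right, hk]⟩
  intro α hα
  rcases RS.pos_or_neg α hα with h | h
  · exact hpos α h
  · obtain ⟨m, hm⟩ := hpos _ h
    exact ⟨-m, by rw [inner_neg_right] at hm; push_cast; linarith⟩

lemma corootLattice_le_coweightLattice : RS.corootLattice ≤ RS.coweightLattice := by
  rw [corootLattice, AddSubgroup.closure_le]
  rintro _ ⟨α, hα, rfl⟩ β hβ
  obtain ⟨n, hn⟩ := RS.crystallographic α hα β hβ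
  exact ⟨n, by rw [corootVec, real_inner_smul_left, ← hn]; ring⟩

lemma discreteTopology_coweightLattice : DiscreteTopology RS.coweightLattice := by
  have hU : IsOpen {x : V | ∀ i, |⟪x, RS.simpleRoot i⟫| < 1} := by
    simp only [ofPred_forall]
    exact isOpen_iInter_of_finite fun i =>
      isOpen_lt (continuous_id.inner continuous_const).abs continuous_const
  refine discreteTopology_iff_isOpen_singleton_zero.mpr ?_
  convert hU.preimage continuous_subtype_val
  ext ⟨x, hx⟩
  simp only [mem_singleton_iff, mem_preimage, mem_ofPred_eq, AddSubgroup.mk_eq_zero]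
  refine ⟨by rintro rfl; simp, fun h => RS.eq_zero_of_forall_inner_simpleRoot_eq_zero fun i => ?_⟩
  obtain ⟨k, hk⟩ := hx _ (RS.simpleRoot_mem i)
  have := h i
  rw [hk] at this ⊢
  exact_mod_cast Int.abs_lt_one_iff.mp (by exact_mod_cast this)

lemma finite_inter_coweightLattice {s : Set V} (hs : IsBounded s) :
    (s ∩ RS.coweightLattice).Finite := by
  have := RS.finiteDimensional
  have := RS.discreteTopology_coweightLattice
  exact finite_isBounded_inter_isClosed DiscreteTopology.isDiscrete hs
    AddSubgroup.isClosed_of_discrete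

lemma inner_reflFun_reflFun (α x y : V) : ⟪reflFun α x, reflFun α y⟫ = ⟪x, y⟫ := by
  by_cases h : α = 0
  · simp [reflFun, h]
  · have hs : ⟪α, α⟫ ≠ 0 := inner_self_ne_zero.mpr h
    simp only [reflFun, inner_sub_left, inner_sub_right, real_inner_smul_left,
      real_inner_smul_right]
    rw [real_inner_comm α x]
    field_simp
    ring

def rootIsometries : Subgroup (V ≃ₗ[ℝ] V) where
  carrier := {v | (∀ x y, ⟪v x, v y⟫ = ⟪x, y⟫) ∧ ∀ α, v α ∈ RS.Δ ↔ α ∈ RS.Δ}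
  mul_mem' := fun ⟨hv, hvΔ⟩ ⟨hw, hwΔ⟩ =>
    ⟨fun x y => (hv _ _).trans (hw x y), fun α => (hvΔ _).trans (hwΔ α)⟩
  one_mem' := ⟨fun _ _ => rfl, fun _ => Iff.rfl⟩
  inv_mem' := fun {v} ⟨hv, hvΔ⟩ =>
    ⟨fun x y => by simpa using (hv (v.symm x) (v.symm y)).symm,
      fun α => by simpa using (hvΔ (v.symm α)).symm⟩

lemma weylGroup_le_rootIsometries : RS.weylGroup ≤ RS.rootIsometries := by
  refine Subgroup.closure_le _ |>.mpr ?_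
  rintro _ ⟨α, hα, rfl⟩
  refine ⟨inner_reflFun_reflFun α, fun β => ⟨fun h => ?_, RS.reflect_mem α hα β⟩⟩
  rw [← reflFun_involutive α β]
  exact RS.reflect_mem α hα _ h

section WeylGroup

variable {RS} {v : V ≃ₗ[ℝ] V} (hv : v ∈ RS.weylGroup)
include hv

lemma inner_map_map_of_mem_weylGroup (x y : V) : ⟪v x, v y⟫ = ⟪x, y⟫ :=
  (RS.weylGroup_le_rootIsometries hv).1 x y

lemma map_mem_Δ_iff_of_mem_weylGroup {α : V} : v α ∈ RS.Δ ↔ α ∈ RS.Δ :=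
  (RS.weylGroup_le_rootIsometries hv).2 α

lemma inner_map_left_of_mem_weylGroup (x y : V) : ⟪v x, y⟫ = ⟪x, v.symm y⟫ := by
  simpa using inner_map_map_of_mem_weylGroup hv x (v.symm y)

lemma norm_map_of_mem_weylGroup (x : V) : ‖v x‖ = ‖x‖ := by
  rw [norm_eq_sqrt_real_inner, norm_eq_sqrt_real_inner, inner_map_map_of_mem_weylGroup hv]

lemma continuous_of_mem_weylGroup : Continuous v :=
  AddMonoidHomClass.continuous_of_bound v 1 fun x => by
    rw [norm_map_of_mem_weylGroup hv, one_mul]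

lemma map_mem_coweightLattice_of_mem_weylGroup {x : V} (hx : x ∈ RS.coweightLattice) :
    v x ∈ RS.coweightLattice := fun α hα => by
  rw [inner_map_left_of_mem_weylGroup hv]
  exact hx _ (map_mem_Δ_iff_of_mem_weylGroup hv |>.mp (by simpa using hα))

lemma map_mem_corootLattice_of_mem_weylGroup {r : V} (hr : r ∈ RS.corootLattice) :
    v r ∈ RS.corootLattice := by
  suffices RS.corootLattice ≤ RS.corootLattice.comap v.toLinearMap.toAddMonoidHom from this hr
  rw [corootLattice, AddSubgroup.closure_le]
  rintro _ ⟨α, hα, rfl⟩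
  have : v (corootVec α) = corootVec (v α) := by
    rw [corootVec, corootVec, map_smul, inner_map_map_of_mem_weylGroup hv]
  rw [SetLike.mem_coe, AddSubgroup.mem_comap]
  change v (corootVec α) ∈ _
  rw [this]
  exact AddSubgroup.subset_closure ⟨v α, (map_mem_Δ_iff_of_mem_weylGroup hv).mpr hα, rfl⟩

end WeylGroup

lemma weylGroup_finite : (RS.weylGroup : Set (V ≃ₗ[ℝ] V)).Finite := by
  refine Finite.of_finite_image (f := fun v i => v (RS.simpleRoot i))
    ((Finite.pi fun _ => RS.finite).subset ?_) fun v _ w _ h =>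
      LinearEquiv.toLinearMap_injective (LinearMap.ext_on_range RS.span_simpleRoot (congrFun h))
  rintro _ ⟨v, hv, rfl⟩
  exact mem_univ_pi.mpr fun i => (map_mem_Δ_iff_of_mem_weylGroup hv).mpr (RS.simpleRoot_mem i)

def dilatedAlcove (q : ℝ) : Set V :=
  {x | (∀ i, 0 < ⟪x, RS.simpleRoot i⟫) ∧ ⟪x, RS.θ⟫ < q}

def closedDilatedAlcove (q : ℝ) : Set V :=
  {x | (∀ i, 0 ≤ ⟪x, RS.simpleRoot i⟫) ∧ ⟪x, RS.θ⟫ ≤ q}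

def dilatedWalls (q : ℝ) : Set V :=
  {x | ∃ β ∈ RS.Δ, ∃ k : ℤ, ⟪x, β⟫ = q * k}

lemma dilatedAlcove_nonempty {q : ℝ} (hq : 0 < q) : (RS.dilatedAlcove q).Nonempty := by
  obtain ⟨z, hz⟩ := RS.exists_inner_simpleRoot_eq fun _ => 1
  have hzθ : 0 ≤ ⟪z, RS.θ⟫ := RS.inner_nonneg_of_mem_pos (by simp [hz]) RS.θ_mem
  refine ⟨(q / (⟪z, RS.θ⟫ + 1)) • z, fun i => ?_, ?_⟩
  · rw [real_inner_smul_left, hz i, mul_one]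
    positivity
  · rw [real_inner_smul_left, div_mul_eq_mul_div, div_lt_iff₀ (by positivity)]
    nlinarith

variable {RS} {q : ℝ}

lemma convex_dilatedAlcove : Convex ℝ (RS.dilatedAlcove q) := by
  rintro x ⟨hx, hxθ⟩ y ⟨hy, hyθ⟩ a b ha hb hab
  rcases ha.eq_or_lt with rfl | ha
  · rw [zero_add] at hab
    simpa [hab] using ⟨hy, hyθ⟩
  · obtain rfl : b = 1 - a := by linarith
    simp only [dilatedAlcove, mem_ofPred_eq, inner_add_left, real_inner_smul_left]
    exact ⟨fun i => by nlinarith [hx i, hy i],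
      by nlinarith [mul_lt_mul_of_pos_left hxθ ha, mul_le_mul_of_nonneg_left hyθ.le hb]⟩

lemma isOpen_dilatedAlcove : IsOpen (RS.dilatedAlcove q) := by
  simp only [dilatedAlcove, ofPred_and, ofPred_forall]
  exact (isOpen_iInter_of_finite fun i =>
    isOpen_lt continuous_const (continuous_id.inner continuous_const)).inter
    (isOpen_lt (continuous_id.inner continuous_const) continuous_const)

lemma isClosed_closedDilatedAlcove : IsClosed (RS.closedDilatedAlcove q) := by
  simp only [closedDilatedAlcove, ofPred_and, ofPred_forall]
  exact (isClosed_iInter fun i =>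
    isClosed_le continuous_const (continuous_id.inner continuous_const)).inter
    (isClosed_le (continuous_id.inner continuous_const) continuous_const)

lemma dilatedAlcove_subset_closedDilatedAlcove :
    RS.dilatedAlcove q ⊆ RS.closedDilatedAlcove q :=
  fun _ hx => ⟨fun i => (hx.1 i).le, hx.2.le⟩

lemma closure_dilatedAlcove (hq : 0 < q) :
    closure (RS.dilatedAlcove q) = RS.closedDilatedAlcove q := by
  refine (closure_minimal dilatedAlcove_subset_closedDilatedAlcove
    isClosed_closedDilatedAlcove).antisymm fun x hx => ?_
  obtain ⟨c, hc⟩ := RS.dilatedAlcove_nonempty hq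
  have hseg : openSegment ℝ x c ⊆ RS.dilatedAlcove q := by
    rintro _ ⟨a, b, ha, hb, hab, rfl⟩
    simp only [dilatedAlcove, mem_ofPred_eq, inner_add_left, real_inner_smul_left]
    exact ⟨fun i => by nlinarith [hx.1 i, hc.1 i], by nlinarith [hx.2, hc.2]⟩
  exact closure_mono hseg (segment_subset_closure_openSegment (left_mem_segment ℝ x c))

lemma disjoint_dilatedAlcove_dilatedWalls (hq : 0 < q) :
    Disjoint (RS.dilatedAlcove q) (RS.dilatedWalls q) := by
  rw [disjoint_iff_forall_ne]
  rintro x ⟨hx, hxθ⟩ _ ⟨β, hβ, k, hk⟩ rfl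
  have hlt : ∀ γ ∈ RS.pos, 0 < ⟪x, γ⟫ ∧ ⟪x, γ⟫ < q := fun γ hγ =>
    ⟨RS.inner_pos_of_mem_pos hx hγ,
      (RS.inner_le_inner_θ_of_mem_pos (fun i => (hx i).le) hγ).trans_lt hxθ⟩
  rcases RS.pos_or_neg β hβ with h | h
  · obtain ⟨h0, hq'⟩ := hlt β h
    rw [hk] at h0 hq'
    have : (0 : ℝ) < k ∧ (k : ℝ) < 1 :=
      ⟨pos_of_mul_pos_right h0 hq.le, by nlinarith⟩
    norm_cast at this
    omega
  · obtain ⟨h0, hq'⟩ := hlt _ h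
    rw [inner_neg_right, hk] at h0 hq'
    have : (k : ℝ) < 0 ∧ (-1 : ℝ) < k := ⟨by nlinarith, by nlinarith⟩
    norm_cast at this
    omega

lemma mem_dilatedAlcove_of_notMem_dilatedWalls {x : V} (hx : x ∈ RS.closedDilatedAlcove q)
    (hxw : x ∉ RS.dilatedWalls q) : x ∈ RS.dilatedAlcove q := by
  refine ⟨fun i => (hx.1 i).lt_of_ne fun h => hxw ⟨_, RS.simpleRoot_mem i, 0, ?_⟩,
    hx.2.lt_of_ne fun h => hxw ⟨_, RS.θ_mem_Δ, 1, ?_⟩⟩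
  · simp [← h]
  · simp [h]

lemma subset_dilatedAlcove_of_isPreconnected {S : Set V} (hS : IsPreconnected S)
    (hSw : Disjoint S (RS.dilatedWalls q)) (hSA : (S ∩ RS.dilatedAlcove q).Nonempty) :
    S ⊆ RS.dilatedAlcove q := by
  set B := {x : V | (∃ i, ⟪x, RS.simpleRoot i⟫ < 0) ∨ q < ⟪x, RS.θ⟫}
  have hB : IsOpen B := by
    simp only [B, ofPred_or, ofPred_exists]
    exact (isOpen_iUnion fun i => isOpen_lt (continuous_id.inner continuous_const)
      continuous_const).union (isOpen_lt continuous_const (continuous_id.inner continuous_const))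
  have hAB : Disjoint (RS.dilatedAlcove q) B := by
    rw [disjoint_iff_forall_ne]
    rintro x ⟨hx, hxθ⟩ _ (⟨i, hi⟩ | hθ) rfl
    · exact (hx i).not_gt hi
    · exact hxθ.not_gt hθ
  refine hS.subset_left_of_subset_union isOpen_dilatedAlcove hB hAB (fun x hx => ?_) hSA
  by_contra h
  simp only [mem_union, not_or, B, mem_ofPred_eq, not_exists, not_lt] at h
  exact h.1 (mem_dilatedAlcove_of_notMem_dilatedWalls ⟨h.2.1, h.2.2⟩ (hSw.notMem_of_mem_left hx))

section AffineSymmetry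

variable {u : V ≃ₗ[ℝ] V} (hu : u ∈ RS.weylGroup) {w : V} (hw : w ∈ RS.coweightLattice)
include hu hw

lemma map_add_smul_notMem_dilatedWalls {x : V} (hx : x ∉ RS.dilatedWalls q) :
    u (x + q • w) ∉ RS.dilatedWalls q := by
  rintro ⟨β, hβ, k, hk⟩
  have hβ' : u.symm β ∈ RS.Δ := (map_mem_Δ_iff_of_mem_weylGroup hu).mp (by simpa using hβ)
  obtain ⟨m, hm⟩ := hw _ hβ'
  refine hx ⟨_, hβ', k - m, ?_⟩
  rw [inner_map_left_of_mem_weylGroup hu, inner_add_left, real_inner_smul_left, hm] at hk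
  push_cast
  linarith

lemma mapsTo_dilatedAlcove (hq : 0 < q) {c : V} (hc : c ∈ RS.dilatedAlcove q)
    (hσc : u (c + q • w) ∈ RS.dilatedAlcove q) :
    MapsTo (fun x => u (x + q • w)) (RS.dilatedAlcove q) (RS.dilatedAlcove q) := by
  have hσ : Continuous fun x => u (x + q • w) :=
    (continuous_of_mem_weylGroup hu).comp (continuous_id.add continuous_const)
  rw [mapsTo_iff_image_subset]
  refine subset_dilatedAlcove_of_isPreconnected
    (convex_dilatedAlcove.isPreconnected.image _ hσ.continuousOn) ?_ ⟨_, mem_image_of_mem _ hc, hσc⟩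
  rw [disjoint_left]
  rintro _ ⟨x, hx, rfl⟩
  exact map_add_smul_notMem_dilatedWalls hu hw
    ((disjoint_dilatedAlcove_dilatedWalls hq).notMem_of_mem_left hx)

lemma mapsTo_closedDilatedAlcove (hq : 0 < q) {c : V} (hc : c ∈ RS.dilatedAlcove q)
    (hσc : u (c + q • w) ∈ RS.dilatedAlcove q) :
    MapsTo (fun x => u (x + q • w)) (RS.closedDilatedAlcove q) (RS.closedDilatedAlcove q) := by
  rw [← closure_dilatedAlcove hq]
  exact (mapsTo_dilatedAlcove hu hw hq hc hσc).closure
    ((continuous_of_mem_weylGroup hu).comp (continuous_id.add continuous_const))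

lemma image_closedDilatedAlcove (hq : 0 < q) {c : V} (hc : c ∈ RS.dilatedAlcove q)
    (hσc : u (c + q • w) ∈ RS.dilatedAlcove q) :
    (fun x => u (x + q • w)) '' RS.closedDilatedAlcove q = RS.closedDilatedAlcove q := by
  refine (mapsTo_closedDilatedAlcove hu hw hq hc hσc).image_subset.antisymm fun x hx => ?_
  -- the inverse `x ↦ u⁻¹ (x + q • -u w)` is of the same form and sends `u (c + q • w)` to `c`
  have hu' : u.symm ∈ RS.weylGroup := inv_mem hu
  have hw' : -u w ∈ RS.coweightLattice :=
    RS.coweightLattice.neg_mem (map_mem_coweightLattice_of_mem_weylGroup hu hw)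
  have hc' : u.symm (u (c + q • w) + q • -u w) ∈ RS.dilatedAlcove q := by
    simpa [smul_neg] using hc
  exact ⟨_, mapsTo_closedDilatedAlcove hu' hw' hq hσc hc' hx, by simp [smul_neg]⟩

end AffineSymmetry

variable (RS) in
def dilatedAffineOrbit (q : ℝ) (x : V) : Set V :=
  {y | ∃ v ∈ RS.weylGroup, ∃ r ∈ RS.corootLattice, y = v (x + q • r)}

lemma map_mem_dilatedAffineOrbit {v : V ≃ₗ[ℝ] V} (hv : v ∈ RS.weylGroup) {x y : V}
    (hy : y ∈ RS.dilatedAffineOrbit q x) : v y ∈ RS.dilatedAffineOrbit q x := by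
  obtain ⟨v', hv', r, hr, rfl⟩ := hy
  exact ⟨v * v', mul_mem hv hv', r, hr, rfl⟩

lemma add_smul_mem_dilatedAffineOrbit {r : V} (hr : r ∈ RS.corootLattice) {x y : V}
    (hy : y ∈ RS.dilatedAffineOrbit q x) : y + q • r ∈ RS.dilatedAffineOrbit q x := by
  obtain ⟨v, hv, r', hr', rfl⟩ := hy
  refine ⟨v, hv, r' + v.symm r,
    add_mem hr' (map_mem_corootLattice_of_mem_weylGroup (inv_mem hv) hr), ?_⟩
  simp [smul_add, add_assoc]

lemma finite_dilatedAffineOrbit_inter_closedBall (hq : 0 < q) (x c : V) (R : ℝ) :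
    (RS.dilatedAffineOrbit q x ∩ closedBall c R).Finite := by
  have hQ : (closedBall 0 ((R + ‖c‖ + ‖x‖) / q) ∩ (RS.corootLattice : Set V)).Finite :=
    (RS.finite_inter_coweightLattice isBounded_closedBall).subset
      (inter_subset_inter_right _ RS.corootLattice_le_coweightLattice)
  refine ((RS.weylGroup_finite.prod hQ).image fun vr => vr.1 (x + q • vr.2)).subset ?_
  rintro _ ⟨⟨v, hv, r, hr, rfl⟩, hball⟩
  refine ⟨(v, r), ⟨hv, ?_, hr⟩, rfl⟩
  rw [mem_closedBall, dist_eq_norm] at hball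
  have h1 := norm_sub_norm_le (v (x + q • r)) c
  rw [norm_map_of_mem_weylGroup hv] at h1
  have h2 : ‖q • r‖ ≤ ‖x + q • r‖ + ‖x‖ := by simpa using norm_sub_le (x + q • r) x
  rw [norm_smul, Real.norm_of_nonneg hq.le] at h2
  rw [mem_closedBall_zero_iff, le_div_iff₀ hq]
  linarith

lemma exists_dist_lt_of_notMem_closedDilatedAlcove {c x y : V} (hc : c ∈ RS.dilatedAlcove q)
    (hy : y ∈ RS.dilatedAffineOrbit q x) (hyT : y ∉ RS.closedDilatedAlcove q) :
    ∃ y' ∈ RS.dilatedAffineOrbit q x, dist y' c < dist y c := by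
  simp only [closedDilatedAlcove, mem_ofPred_eq, not_and_or, not_forall, not_le] at hyT
  rcases hyT with ⟨i, hi⟩ | hθ
  · refine ⟨sRefl (RS.simpleRoot i) y,
      map_mem_dilatedAffineOrbit (Subgroup.subset_closure ⟨_, RS.simpleRoot_mem i, rfl⟩) hy, ?_⟩
    convert dist_reflect_lt_of_mul_neg (a := RS.simpleRoot i) (y := y) (t := 0) (c := c)
      (by simpa using mul_neg_of_neg_of_pos hi (hc.1 i)) using 2
    change reflFun _ y = _
    rw [reflFun, real_inner_comm, sub_zero]
  · refine ⟨sRefl RS.θ y + q • corootVec RS.θ, add_smul_mem_dilatedAffineOrbit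
      (AddSubgroup.subset_closure ⟨_, RS.θ_mem_Δ, rfl⟩)
      (map_mem_dilatedAffineOrbit (Subgroup.subset_closure ⟨_, RS.θ_mem_Δ, rfl⟩) hy), ?_⟩
    convert dist_reflect_lt_of_mul_neg (a := RS.θ) (y := y) (t := q) (c := c)
      (mul_neg_of_pos_of_neg (sub_pos.mpr hθ) (sub_neg.mpr hc.2)) using 2
    change reflFun _ y + _ = _
    rw [reflFun, corootVec, real_inner_comm]
    module

lemma exists_mem_dilatedAffineOrbit_mem_closedDilatedAlcove (hq : 0 < q) (x : V) :
    ∃ y ∈ RS.dilatedAffineOrbit q x, y ∈ RS.closedDilatedAlcove q := by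
  obtain ⟨c, hc⟩ := RS.dilatedAlcove_nonempty hq
  have hx : x ∈ RS.dilatedAffineOrbit q x := ⟨1, one_mem _, 0, zero_mem _, by simp⟩
  obtain ⟨y, ⟨hy, hyc⟩, hmin⟩ := exists_min_image _ (dist · c)
    (finite_dilatedAffineOrbit_inter_closedBall hq x c (dist x c))
    ⟨x, hx, mem_closedBall.mpr le_rfl⟩
  refine ⟨y, hy, by_contra fun hyT => ?_⟩
  obtain ⟨y', hy', hlt⟩ := exists_dist_lt_of_notMem_closedDilatedAlcove hc hy hyT
  exact (hmin y' ⟨hy', mem_closedBall.mpr (hlt.le.trans hyc)⟩).not_gt hlt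

lemma exists_image_closedDilatedAlcove_eq (hq : 0 < q) {l : V}
    (hl : l ∈ RS.coweightLattice) : ∃ u ∈ RS.weylGroup, ∃ s ∈ RS.corootLattice,
      (fun x => u (x + q • (l + s))) '' RS.closedDilatedAlcove q = RS.closedDilatedAlcove q := by
  obtain ⟨c, hc⟩ := RS.dilatedAlcove_nonempty hq
  obtain ⟨_, ⟨u, hu, s, hs, rfl⟩, hT⟩ :=
    exists_mem_dilatedAffineOrbit_mem_closedDilatedAlcove (RS := RS) hq (c + q • l)
  have hw : l + s ∈ RS.coweightLattice := add_mem hl (RS.corootLattice_le_coweightLattice hs)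
  have hσc : u (c + q • (l + s)) ∈ RS.dilatedAlcove q :=
    mem_dilatedAlcove_of_notMem_dilatedWalls (by rwa [smul_add, ← add_assoc])
      (map_add_smul_notMem_dilatedWalls hu hw
        ((disjoint_dilatedAlcove_dilatedWalls hq).notMem_of_mem_left hc))
  exact ⟨u, hu, s, hs, image_closedDilatedAlcove hu hw hq hc hσc⟩

variable (RS) in
def sMinSimplex : Set V :=
  {x | (∀ i, RS.IsShort (RS.simpleRoot i) → -1 ≤ ⟪x, RS.simpleRoot i⟫) ∧
    (∀ i, ¬ RS.IsShort (RS.simpleRoot i) → 0 ≤ ⟪x, RS.simpleRoot i⟫) ∧ ⟪x, RS.θ⟫ ≤ 1}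

variable (RS) in
open Classical in
def IsShortCoweight (ρ : V) : Prop :=
  ∀ i, ⟪ρ, RS.simpleRoot i⟫ = if RS.IsShort (RS.simpleRoot i) then 1 else 0

variable (RS) in
lemma exists_isShortCoweight : ∃ ρ, RS.IsShortCoweight ρ :=
  RS.exists_inner_simpleRoot_eq _

namespace IsShortCoweight

variable {ρ : V} (hρ : RS.IsShortCoweight ρ)
include hρ

open Classical in
lemma mem_coweightLattice : ρ ∈ RS.coweightLattice :=
  RS.mem_coweightLattice_of_inner_simpleRoot fun i =>
    ⟨if RS.IsShort (RS.simpleRoot i) then 1 else 0, by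
      rw [hρ i]
      split_ifs <;> simp⟩

lemma inner_θ {g : ℕ} (hg : RS.IsShortCoeffSum g) : ⟪ρ, RS.θ⟫ = g := by
  obtain ⟨c, hθ, rfl⟩ := hg
  rw [hθ, inner_sum]
  push_cast
  refine Finset.sum_congr rfl fun i _ => ?_
  rw [real_inner_smul_right, hρ i]
  split_ifs <;> simp

lemma image_add_sMinSimplex :
    (· + ρ) '' RS.sMinSimplex = RS.closedDilatedAlcove (⟪ρ, RS.θ⟫ + 1) := by
  ext y
  refine ⟨?_, fun hy => ⟨y - ρ, ?_, sub_add_cancel y ρ⟩⟩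
  · rintro ⟨x, ⟨hs, hl, hθ⟩, rfl⟩
    refine ⟨fun i => ?_, ?_⟩
    · rw [inner_add_left, hρ i]
      split_ifs with h
      · linarith [hs i h]
      · linarith [hl i h]
    · rw [inner_add_left]
      linarith
  · refine ⟨fun i h => ?_, fun i h => ?_, ?_⟩
    · rw [inner_sub_left, hρ i, if_pos h]
      linarith [hy.1 i]
    · rw [inner_sub_left, hρ i, if_neg h]
      linarith [hy.1 i]
    · rw [inner_sub_left]
      linarith [hy.2]

end IsShortCoweight

end RootSystemData

theorem statement8_general {V : Type*} [NormedAddCommGroup V] [InnerProductSpace ℝ V] {p : ℕ}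
    (RS : RootSystemData V p)
    (g : ℕ) (hg : RS.IsShortCoeffSum g)
    (hcop : Nat.Coprime (g + 1) RS.indexOfConnection) :
    ∃ v ∈ RS.weylGroup, ∃ r ∈ RS.corootLattice,
      affStar v r '' {x : V | (∀ i, RS.IsShort (RS.simpleRoot i) → -1 ≤ ⟪x, RS.simpleRoot i⟫) ∧
          (∀ i, ¬ RS.IsShort (RS.simpleRoot i) → 0 ≤ ⟪x, RS.simpleRoot i⟫) ∧
          ⟪x, RS.θ⟫ ≤ 1} =
        {x : V | (∀ i, 0 ≤ ⟪x, RS.simpleRoot i⟫) ∧ ⟪x, RS.θ⟫ ≤ (g : ℝ) + 1} := by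
  open RootSystemData in
  obtain ⟨ρ, hρ⟩ := RS.exists_isShortCoweight
  obtain ⟨l, hl, hlρ⟩ :=
    RS.corootLattice.exists_nsmul_add_mem_of_coprime hcop hρ.mem_coweightLattice
  obtain ⟨u, hu, s, hs, hσ⟩ :=
    exists_image_closedDilatedAlcove_eq (RS := RS) (by positivity : (0 : ℝ) < g + 1) hl
  refine ⟨u, hu, ((g : ℝ) + 1) • (l + s) + ρ, ?_, ?_⟩
  · have : ((g : ℝ) + 1) • (l + s) + ρ = ((g + 1) • l + ρ) + (g + 1) • s := by
      rw [← Nat.cast_smul_eq_nsmul ℝ, ← Nat.cast_smul_eq_nsmul ℝ]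
      push_cast
      module
    rw [this]
    exact add_mem hlρ (nsmul_mem hs _)
  · calc affStar u (((g : ℝ) + 1) • (l + s) + ρ) '' RS.sMinSimplex
        = (fun x => u (x + ((g : ℝ) + 1) • (l + s))) '' ((· + ρ) '' RS.sMinSimplex) := by
          rw [image_image]
          simp only [add_assoc, add_comm ρ]
          rfl
      _ = RS.closedDilatedAlcove (g + 1) := by
          rw [hρ.image_add_sMinSimplex, hρ.inner_θ hg, hσ]

/-- Let `g` be the sum of the coefficients of the short simple roots in
`θ`, and `f` the index of connection. If `g + 1` and `f` are relatively prime, then some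
element of the affine Weyl group `Ŵ` maps the simplex `D^(s)_min` onto the dilated closed
fundamental alcove `(g+1)·closure(A)`. -/
theorem statement8 {V : Type*} [NormedAddCommGroup V] [InnerProductSpace ℝ V] {p : ℕ}
    (RS : RootSystemData V p) (htwo : RS.TwoLengths)
    (g : ℕ) (hg : RS.IsShortCoeffSum g)
    (hcop : Nat.Coprime (g + 1) RS.indexOfConnection) :
    ∃ v ∈ RS.weylGroup, ∃ r ∈ RS.corootLattice,
      affStar v r '' {x : V | (∀ i, RS.IsShort (RS.simpleRoot i) → -1 ≤ ⟪x, RS.simpleRoot i⟫) ∧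
          (∀ i, ¬ RS.IsShort (RS.simpleRoot i) → 0 ≤ ⟪x, RS.simpleRoot i⟫) ∧
          ⟪x, RS.θ⟫ ≤ 1} =
        {x : V | (∀ i, 0 ≤ ⟪x, RS.simpleRoot i⟫) ∧ ⟪x, RS.θ⟫ ≤ (g : ℝ) + 1} :=
  statement8_general RS g hg hcop
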